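/- The value function evaluated at the initial state equals the optimal capital increment of the planning problem: f_1(0, B_0, 0) equals the supremum of B_T − B_0 over all feasible plans, where both sides equal −∞ when no feasible plan exists. -/

import Mathlib

noncomputable def setupInd (x : ℝ) : ℝ := if 0 < x then 1 else 0

noncomputable def wSeq (d : ℕ → ℝ) (β : ℝ) (v : ℕ → ℝ) : ℕ → ℝ
  | 0 => 0
  | t + 1 => max 0 (d (t + 1) - β * wSeq d β v t) - v (t + 1)

noncomputable def EdSeq (d : ℕ → ℝ) (β : ℝ) (v : ℕ → ℝ) (t : ℕ) : ℝ :=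
  max 0 (d t - β * wSeq d β v (t - 1))

noncomputable def ISeq (y v : ℕ → ℝ) (m t : ℕ) : ℝ :=
  ∑ j ∈ Finset.Icc m t, (y j - v j)

noncomputable def BSeq (p h s c : ℕ → ℝ) (R : ℝ) (TL : ℕ) (y v : ℕ → ℝ)
    (m : ℕ) (Binit : ℝ) : ℕ → ℝ
  | 0 => Binit
  | t + 1 =>
    if t + 1 < m then Binit
    else
      BSeq p h s c R TL y v m Binit t + p (t + 1) * v (t + 1)
        - h (t + 1) * ISeq y v m (t + 1)
        - s (t + 1) * setupInd (y (t + 1))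
        - c (t + 1) * y (t + 1)
        - (if t + 1 = TL then R else 0)

/-- Feasibility of a full-horizon plan (periods 1..T). -/
def Feasible (T : ℕ) (d p c h s : ℕ → ℝ) (β B0 R : ℝ) (TL : ℕ)
    (y v : ℕ → ℝ) : Prop :=
  ∀ t, 1 ≤ t → t ≤ T →
    0 ≤ y t ∧ 0 ≤ v t ∧ v t ≤ EdSeq d β v t ∧
    0 ≤ ISeq y v 1 t ∧
    s t * setupInd (y t) + c t * y t ≤ BSeq p h s c R TL y v 1 B0 (t - 1) ∧
    0 ≤ BSeq p h s c R TL y v 1 B0 t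

/-- Feasibility of a plan on periods m..n, β = 0 case (sales bounded by demand),
with initial inventory 0 and initial capital `Binit`. -/
def FeasibleSeg (m n : ℕ) (d p c h s : ℕ → ℝ) (R : ℝ) (TL : ℕ) (Binit : ℝ)
    (y v : ℕ → ℝ) : Prop :=
  ∀ t, m ≤ t → t ≤ n →
    0 ≤ y t ∧ 0 ≤ v t ∧ v t ≤ d t ∧
    0 ≤ ISeq y v m t ∧
    s t * setupInd (y t) + c t * y t ≤ BSeq p h s c R TL y v m Binit (t - 1) ∧
    0 ≤ BSeq p h s c R TL y v m Binit t

/-- Backward value function: `fVal T d p c h s β R TL k I B w` is `f_{T+1-k}(I,B,w)`,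
the maximum capital increment over periods `T+1-k,…,T` (in `EReal`, `sSup ∅ = ⊥`). -/
noncomputable def fVal (T : ℕ) (d p c h s : ℕ → ℝ) (β R : ℝ) (TL : ℕ) :
    ℕ → ℝ → ℝ → ℝ → EReal
  | 0 => fun _ _ _ => 0
  | k + 1 => fun I B w =>
    sSup {x : EReal | ∃ yy vv Bn : ℝ,
      0 ≤ yy ∧ 0 ≤ vv ∧ vv ≤ max 0 (d (T - k) - β * w) ∧
      s (T - k) * setupInd yy + c (T - k) * yy ≤ B ∧
      0 ≤ I + yy - vv ∧
      Bn = B + p (T - k) * vv - h (T - k) * (I + yy - vv)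
        - s (T - k) * setupInd yy - c (T - k) * yy
        - (if T - k = TL then R else 0) ∧
      0 ≤ Bn ∧
      x = ((Bn - B : ℝ) : EReal)
        + fVal T d p c h s β R TL k (I + yy - vv) Bn (max 0 (d (T - k) - β * w) - vv)}


/-! ### Auxiliary generalized sequences -/

noncomputable def wGen (d : ℕ → ℝ) (β : ℝ) (v : ℕ → ℝ) (m : ℕ) (w0 : ℝ) : ℕ → ℝ
  | 0 => w0
  | t + 1 => if t + 1 < m then w0
      else max 0 (d (t + 1) - β * wGen d β v m w0 t) - v (t + 1)

noncomputable def BGen (p h s c : ℕ → ℝ) (R : ℝ) (TL : ℕ) (y v : ℕ → ℝ)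
    (m : ℕ) (I0 B0 : ℝ) : ℕ → ℝ
  | 0 => B0
  | t + 1 =>
    if t + 1 < m then B0
    else
      BGen p h s c R TL y v m I0 B0 t + p (t + 1) * v (t + 1)
        - h (t + 1) * (I0 + ISeq y v m (t + 1))
        - s (t + 1) * setupInd (y (t + 1))
        - c (t + 1) * y (t + 1)
        - (if t + 1 = TL then R else 0)

def FeasGen (T : ℕ) (d p c h s : ℕ → ℝ) (β R : ℝ) (TL : ℕ)
    (m : ℕ) (I0 B0 w0 : ℝ) (y v : ℕ → ℝ) : Prop :=
  ∀ t, m ≤ t → t ≤ T →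
    0 ≤ y t ∧ 0 ≤ v t ∧ v t ≤ max 0 (d t - β * wGen d β v m w0 (t - 1)) ∧
    0 ≤ I0 + ISeq y v m t ∧
    s t * setupInd (y t) + c t * y t ≤ BGen p h s c R TL y v m I0 B0 (t - 1) ∧
    0 ≤ BGen p h s c R TL y v m I0 B0 t

lemma wGen_of_lt {d : ℕ → ℝ} {β : ℝ} {v : ℕ → ℝ} {m : ℕ} {w0 : ℝ} {t : ℕ}
    (h : t < m) : wGen d β v m w0 t = w0 := by
  cases t with
  | zero => rfl
  | succ t => simp [wGen, h]

lemma BGen_of_lt {p h s c : ℕ → ℝ} {R : ℝ} {TL : ℕ} {y v : ℕ → ℝ} {m : ℕ}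
    {I0 B0 : ℝ} {t : ℕ} (ht : t < m) : BGen p h s c R TL y v m I0 B0 t = B0 := by
  cases t with
  | zero => rfl
  | succ t => simp [BGen, ht]

lemma ISeq_of_lt {y v : ℕ → ℝ} {m t : ℕ} (h : t < m) : ISeq y v m t = 0 := by
  unfold ISeq
  rw [Finset.Icc_eq_empty (by omega)]
  simp

lemma ISeq_succ {y v : ℕ → ℝ} {m t : ℕ} (h : m ≤ t + 1) :
    ISeq y v m (t + 1) = ISeq y v m t + (y (t + 1) - v (t + 1)) :=
  Finset.sum_Icc_succ_top h _

/-! ### Congruence lemmas -/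

lemma wGen_congr {d : ℕ → ℝ} {β : ℝ} {v v' : ℕ → ℝ} {m : ℕ} {w0 : ℝ}
    (hv : ∀ j, m ≤ j → v j = v' j) :
    ∀ t, wGen d β v m w0 t = wGen d β v' m w0 t := by
  intro t
  induction t with
  | zero => rfl
  | succ t ih =>
    by_cases hlt : t + 1 < m
    · simp [wGen, hlt]
    · simp only [wGen, hlt, if_false, ih, hv (t + 1) (by omega)]

lemma ISeq_congr {y y' v v' : ℕ → ℝ} {m t : ℕ}
    (hy : ∀ j, m ≤ j → y j = y' j) (hv : ∀ j, m ≤ j → v j = v' j) :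
    ISeq y v m t = ISeq y' v' m t := by
  unfold ISeq
  refine Finset.sum_congr rfl fun j hj => ?_
  rw [Finset.mem_Icc] at hj
  rw [hy j hj.1, hv j hj.1]

lemma BGen_congr {p h s c : ℕ → ℝ} {R : ℝ} {TL : ℕ} {y y' v v' : ℕ → ℝ} {m : ℕ}
    {I0 B0 : ℝ} (hy : ∀ j, m ≤ j → y j = y' j) (hv : ∀ j, m ≤ j → v j = v' j) :
    ∀ t, BGen p h s c R TL y v m I0 B0 t = BGen p h s c R TL y' v' m I0 B0 t := by
  intro t
  induction t with
  | zero => rfl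
  | succ t ih =>
    by_cases hlt : t + 1 < m
    · simp [BGen, hlt]
    · simp only [BGen, hlt, if_false, ih, hy (t + 1) (by omega), hv (t + 1) (by omega),
        ISeq_congr hy hv]

/-! ### Shift lemmas -/

lemma wGen_succ {d : ℕ → ℝ} {β : ℝ} {v : ℕ → ℝ} {m : ℕ} {w0 : ℝ} {t : ℕ}
    (h : m ≤ t + 1) :
    wGen d β v m w0 (t + 1)
      = max 0 (d (t + 1) - β * wGen d β v m w0 t) - v (t + 1) := by
  show (if t + 1 < m then w0 else _) = _
  rw [if_neg (by omega)]

lemma BGen_succ {p h s c : ℕ → ℝ} {R : ℝ} {TL : ℕ} {y v : ℕ → ℝ} {m : ℕ}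
    {I0 B0 : ℝ} {t : ℕ} (ht : m ≤ t + 1) :
    BGen p h s c R TL y v m I0 B0 (t + 1)
      = BGen p h s c R TL y v m I0 B0 t + p (t + 1) * v (t + 1)
        - h (t + 1) * (I0 + ISeq y v m (t + 1))
        - s (t + 1) * setupInd (y (t + 1))
        - c (t + 1) * y (t + 1)
        - (if t + 1 = TL then R else 0) := by
  show (if t + 1 < m then B0 else _) = _
  rw [if_neg (by omega)]

lemma ISeq_self {y v : ℕ → ℝ} {m : ℕ} : ISeq y v m m = y m - v m := by
  unfold ISeq
  rw [Finset.Icc_self, Finset.sum_singleton]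

lemma wGen_start {d : ℕ → ℝ} {β : ℝ} {v : ℕ → ℝ} {m : ℕ} {w0 : ℝ} :
    wGen d β v (m + 1) w0 (m + 1) = max 0 (d (m + 1) - β * w0) - v (m + 1) := by
  rw [wGen_succ le_rfl, wGen_of_lt (by omega)]

lemma wGen_shift {d : ℕ → ℝ} {β : ℝ} {v : ℕ → ℝ} {m : ℕ} {w0 : ℝ} :
    ∀ t, m + 1 ≤ t →
      wGen d β v (m + 1) w0 t
        = wGen d β v (m + 2) (max 0 (d (m + 1) - β * w0) - v (m + 1)) t := by
  intro t ht
  induction t, ht using Nat.le_induction with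
  | base => rw [wGen_start, wGen_of_lt (by omega)]
  | succ t ht ih => rw [wGen_succ (by omega), wGen_succ (by omega), ih]

lemma ISeq_shift {y v : ℕ → ℝ} {m : ℕ} : ∀ t, m + 1 ≤ t →
    ISeq y v (m + 1) t = (y (m + 1) - v (m + 1)) + ISeq y v (m + 2) t := by
  intro t ht
  induction t, ht using Nat.le_induction with
  | base =>
    rw [ISeq_self, show ISeq y v (m + 2) (m + 1) = 0 from ISeq_of_lt (by omega)]
    ring
  | succ t ht ih =>
    rw [ISeq_succ (by omega), ISeq_succ (by omega), ih]
    ring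

lemma BGen_start {p h s c : ℕ → ℝ} {R : ℝ} {TL : ℕ} {y v : ℕ → ℝ} {m : ℕ}
    {I0 B0 : ℝ} :
    BGen p h s c R TL y v (m + 1) I0 B0 (m + 1)
      = B0 + p (m + 1) * v (m + 1) - h (m + 1) * (I0 + (y (m + 1) - v (m + 1)))
        - s (m + 1) * setupInd (y (m + 1)) - c (m + 1) * y (m + 1)
        - (if m + 1 = TL then R else 0) := by
  rw [BGen_succ le_rfl, BGen_of_lt (by omega), ISeq_self]

lemma BGen_shift {p h s c : ℕ → ℝ} {R : ℝ} {TL : ℕ} {y v : ℕ → ℝ} {m : ℕ}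
    {I0 B0 : ℝ} : ∀ t, m + 1 ≤ t →
    BGen p h s c R TL y v (m + 1) I0 B0 t
      = BGen p h s c R TL y v (m + 2) (I0 + (y (m + 1) - v (m + 1)))
          (BGen p h s c R TL y v (m + 1) I0 B0 (m + 1)) t := by
  intro t ht
  induction t, ht using Nat.le_induction with
  | base => rw [BGen_of_lt (show m + 1 < m + 2 by omega)]
  | succ t ht ih =>
    rw [BGen_succ (show m + 1 ≤ t + 1 by omega), BGen_succ (show m + 2 ≤ t + 1 by omega),
      ih, ISeq_shift (t + 1) (by omega)]
    ring_nf

/-! ### EReal sup arithmetic -/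

lemma ereal_const_add_sSup (cc : ℝ) (S : Set EReal) :
    (cc : EReal) + sSup S = sSup ((fun x => (cc : EReal) + x) '' S) := by
  rcases S.eq_empty_or_nonempty with rfl | hS
  · simp [EReal.add_bot]
  · apply le_antisymm
    · have h1 : sSup S ≤ (-cc : ℝ) + sSup ((fun x => (cc : EReal) + x) '' S) := by
        apply sSup_le
        intro x hx
        have hx' : x = (-cc : ℝ) + ((cc : EReal) + x) := by
          rw [← add_assoc, ← EReal.coe_add]
          norm_num
        rw [hx']
        exact add_le_add_right (le_sSup (Set.mem_image_of_mem _ hx)) _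
      calc (cc : EReal) + sSup S
          ≤ (cc : EReal) + ((-cc : ℝ) + sSup ((fun x => (cc : EReal) + x) '' S)) :=
            add_le_add_right h1 _
        _ = sSup ((fun x => (cc : EReal) + x) '' S) := by
            rw [← add_assoc, ← EReal.coe_add]
            norm_num
    · apply sSup_le
      rintro x ⟨x', hx', rfl⟩
      exact add_le_add_right (le_sSup hx') _

/-! ### Main lemma -/

lemma fVal_eq_sSup (T : ℕ) (d p c h s : ℕ → ℝ) (β R : ℝ) (TL : ℕ) :
    ∀ k, k ≤ T → ∀ I B w,
      fVal T d p c h s β R TL k I B w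
        = sSup {x : EReal | ∃ y v : ℕ → ℝ,
            FeasGen T d p c h s β R TL (T + 1 - k) I B w y v ∧
            x = ((BGen p h s c R TL y v (T + 1 - k) I B T - B : ℝ) : EReal)} := by
  intro k
  induction k with
  | zero =>
    intro _ I B w
    have hset : {x : EReal | ∃ y v : ℕ → ℝ,
        FeasGen T d p c h s β R TL (T + 1 - 0) I B w y v ∧
        x = ((BGen p h s c R TL y v (T + 1 - 0) I B T - B : ℝ) : EReal)}
        = {((0 : ℝ) : EReal)} := by
      ext x
      simp only [Set.mem_setOf_eq, Set.mem_singleton_iff]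
      constructor
      · rintro ⟨y, v, _, rfl⟩
        rw [BGen_of_lt (by omega)]
        norm_num
      · rintro rfl
        have hfeas : FeasGen T d p c h s β R TL (T + 1 - 0) I B w (fun _ => 0) (fun _ => 0) :=
          fun t ht1 ht2 => absurd (le_trans ht1 ht2) (by omega)
        refine ⟨fun _ => 0, fun _ => 0, hfeas, ?_⟩
        rw [BGen_of_lt (by omega)]
        norm_num
    rw [hset, sSup_singleton]
    rfl
  | succ k ih =>
    intro hk I B w
    have hk' : k ≤ T := by omega
    obtain ⟨m, hm⟩ : ∃ m, T - k = m + 1 := ⟨T - k - 1, by omega⟩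
    have hm1 : T + 1 - (k + 1) = m + 1 := by omega
    have hm2 : T + 1 - k = m + 2 := by omega
    have hmT : m + 1 ≤ T := by omega
    show sSup _ = _
    rw [hm1]
    apply le_antisymm
    · -- each element of the action set is ≤ sup over plans
      apply sSup_le
      rintro x ⟨yy, vv, Bn, hyy, hvv, hvmax, hcost, hI, hBn, hBn0, rfl⟩
      rw [hm] at hvmax hcost hBn ⊢
      rw [ih hk' (I + yy - vv) Bn (max 0 (d (m + 1) - β * w) - vv), hm2,
        ereal_const_add_sSup]
      apply sSup_le
      rintro _ ⟨_, ⟨y, v, hfeas, rfl⟩, rfl⟩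
      -- combined plan
      set y' : ℕ → ℝ := Function.update y (m + 1) yy with hy'
      set v' : ℕ → ℝ := Function.update v (m + 1) vv with hv'
      have hy'eq : ∀ j, m + 2 ≤ j → y j = y' j := fun j hj => by
        rw [hy', Function.update_of_ne (by omega)]
      have hv'eq : ∀ j, m + 2 ≤ j → v j = v' j := fun j hj => by
        rw [hv', Function.update_of_ne (by omega)]
      have hy'm : y' (m + 1) = yy := Function.update_self _ _ _
      have hv'm : v' (m + 1) = vv := Function.update_self _ _ _
      -- BGen of combined plan at m+1 is Bn
      have hBGenStart : BGen p h s c R TL y' v' (m + 1) I B (m + 1) = Bn := by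
        rw [BGen_start, hy'm, hv'm, hBn]
        ring
      -- identification of tail sequences
      have hBtail : ∀ t, m + 1 ≤ t →
          BGen p h s c R TL y' v' (m + 1) I B t
            = BGen p h s c R TL y v (m + 2) (I + yy - vv) Bn t := by
        intro t ht
        rw [BGen_shift t ht, hBGenStart, hy'm, hv'm,
          show I + (yy - vv) = I + yy - vv by ring]
        exact (BGen_congr (fun j hj => (hy'eq j hj).symm)
          (fun j hj => (hv'eq j hj).symm) t)
      have hwtail : ∀ t, m + 1 ≤ t →
          wGen d β v' (m + 1) w t
            = wGen d β v (m + 2) (max 0 (d (m + 1) - β * w) - vv) t := by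
        intro t ht
        rw [wGen_shift t ht, hv'm]
        exact wGen_congr (fun j hj => (hv'eq j hj).symm) t
      have hItail : ∀ t, m + 1 ≤ t →
          I + ISeq y' v' (m + 1) t = (I + yy - vv) + ISeq y v (m + 2) t := by
        intro t ht
        rw [ISeq_shift t ht, hy'm, hv'm,
          ISeq_congr (fun j hj => (hy'eq j hj).symm) (fun j hj => (hv'eq j hj).symm)]
        ring
      -- feasibility of combined plan
      have hfeas' : FeasGen T d p c h s β R TL (m + 1) I B w y' v' := by
        intro t ht1 ht2
        rcases eq_or_lt_of_le ht1 with rfl | htgt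
        · refine ⟨hy'm ▸ hyy, hv'm ▸ hvv, ?_, ?_, ?_, ?_⟩
          · rw [hv'm, wGen_of_lt (show m + 1 - 1 < m + 1 by omega)]
            exact hvmax
          · rw [ISeq_self, hy'm, hv'm]
            linarith
          · rw [hy'm, BGen_of_lt (show m + 1 - 1 < m + 1 by omega)]
            exact hcost
          · rw [hBGenStart]
            exact hBn0
        · have ht1' : m + 2 ≤ t := htgt
          obtain ⟨g1, g2, g3, g4, g5, g6⟩ := hfeas t ht1' ht2
          refine ⟨?_, ?_, ?_, ?_, ?_, ?_⟩
          · rw [← hy'eq t ht1']; exact g1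
          · rw [← hv'eq t ht1']; exact g2
          · rw [← hv'eq t ht1', hwtail (t - 1) (by omega)]
            exact g3
          · rw [hItail t (by omega)]
            exact g4
          · rw [← hy'eq t ht1', hBtail (t - 1) (by omega)]
            exact g5
          · rw [hBtail t (by omega)]
            exact g6
      apply le_sSup
      refine ⟨y', v', hfeas', ?_⟩
      show ((Bn - B : ℝ) : EReal) + _ = _
      rw [← EReal.coe_add, EReal.coe_eq_coe_iff, hBtail T hmT]
      ring
    · -- sup over plans ≤ sup over actions
      apply sSup_le
      rintro x ⟨y, v, hfeas, rfl⟩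
      obtain ⟨h1, h2, h3, h4, h5, h6⟩ := hfeas (m + 1) le_rfl hmT
      rw [wGen_of_lt (show m + 1 - 1 < m + 1 by omega)] at h3
      rw [BGen_of_lt (show m + 1 - 1 < m + 1 by omega)] at h5
      rw [ISeq_self] at h4
      set Bn := BGen p h s c R TL y v (m + 1) I B (m + 1) with hBndef
      -- tail feasibility
      have htailfeas : FeasGen T d p c h s β R TL (m + 2) (I + (y (m + 1) - v (m + 1))) Bn
          (max 0 (d (m + 1) - β * w) - v (m + 1)) y v := by
        intro t ht1 ht2
        obtain ⟨g1, g2, g3, g4, g5, g6⟩ := hfeas t (by omega) ht2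
        refine ⟨g1, g2, ?_, ?_, ?_, ?_⟩
        · rw [← wGen_shift (m := m) (w0 := w) (t - 1) (by omega)]
          exact g3
        · rw [show I + (y (m + 1) - v (m + 1)) + ISeq y v (m + 2) t
              = I + ISeq y v (m + 1) t by rw [ISeq_shift (m := m) t (by omega)]; ring]
          exact g4
        · rw [← BGen_shift (m := m) (I0 := I) (B0 := B) (t - 1) (by omega)]
          exact g5
        · rw [← BGen_shift (m := m) (I0 := I) (B0 := B) t (by omega)]
          exact g6
      have hBnEq : Bn = B + p (m + 1) * v (m + 1)
          - h (m + 1) * (I + y (m + 1) - v (m + 1))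
          - s (m + 1) * setupInd (y (m + 1)) - c (m + 1) * y (m + 1)
          - (if m + 1 = TL then R else 0) := by
        rw [hBndef, BGen_start]
        ring
      have hBT : BGen p h s c R TL y v (m + 1) I B T
          = BGen p h s c R TL y v (m + 2) (I + (y (m + 1) - v (m + 1))) Bn T :=
        BGen_shift T hmT
      have hstate : I + y (m + 1) - v (m + 1) = I + (y (m + 1) - v (m + 1)) := by ring
      calc ((BGen p h s c R TL y v (m + 1) I B T - B : ℝ) : EReal)
          ≤ ((Bn - B : ℝ) : EReal)
            + fVal T d p c h s β R TL k (I + y (m + 1) - v (m + 1)) Bn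
                (max 0 (d (m + 1) - β * w) - v (m + 1)) := by
            rw [ih hk' _ Bn _, hm2, hstate]
            have hmem : ((BGen p h s c R TL y v (m + 2)
                (I + (y (m + 1) - v (m + 1))) Bn T - Bn : ℝ) : EReal) ∈
                {x : EReal | ∃ y' v' : ℕ → ℝ,
                  FeasGen T d p c h s β R TL (m + 2) (I + (y (m + 1) - v (m + 1))) Bn
                    (max 0 (d (m + 1) - β * w) - v (m + 1)) y' v' ∧
                  x = ((BGen p h s c R TL y' v' (m + 2) (I + (y (m + 1) - v (m + 1))) Bn T
                    - Bn : ℝ) : EReal)} := ⟨y, v, htailfeas, rfl⟩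
            refine le_trans ?_ (add_le_add_right (le_sSup hmem) ((Bn - B : ℝ) : EReal))
            rw [← EReal.coe_add, EReal.coe_le_coe_iff, hBT]
            ring_nf
            exact le_rfl
        _ ≤ _ := by
            apply le_sSup
            rw [hm]
            refine ⟨y (m + 1), v (m + 1), Bn, h1, h2, h3, h5, by linarith, hBnEq, h6, rfl⟩

/-! ### Transfer to the original definitions -/

lemma wSeq_eq_wGen (d : ℕ → ℝ) (β : ℝ) (v : ℕ → ℝ) :
    ∀ t, wSeq d β v t = wGen d β v 1 0 t := by
  intro t
  induction t with
  | zero => rfl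
  | succ t ih =>
    show _ = (if t + 1 < 1 then _ else _)
    rw [if_neg (by omega)]
    show max 0 (d (t + 1) - β * wSeq d β v t) - v (t + 1) = _
    rw [ih]

lemma BSeq_eq_BGen (p h s c : ℕ → ℝ) (R : ℝ) (TL : ℕ) (y v : ℕ → ℝ) (B0 : ℝ) :
    ∀ t, BSeq p h s c R TL y v 1 B0 t = BGen p h s c R TL y v 1 0 B0 t := by
  intro t
  induction t with
  | zero => rfl
  | succ t ih =>
    show (if t + 1 < 1 then _ else _) = (if t + 1 < 1 then _ else _)
    rw [if_neg (show ¬ t + 1 < 1 by omega), if_neg (show ¬ t + 1 < 1 by omega), ih, zero_add]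

lemma Feasible_iff_FeasGen (T : ℕ) (d p c h s : ℕ → ℝ) (β B0 R : ℝ) (TL : ℕ)
    (y v : ℕ → ℝ) :
    Feasible T d p c h s β B0 R TL y v ↔
      FeasGen T d p c h s β R TL 1 0 B0 0 y v := by
  unfold Feasible FeasGen EdSeq
  constructor <;> intro H t ht1 ht2 <;> obtain ⟨h1, h2, h3, h4, h5, h6⟩ := H t ht1 ht2 <;>
    refine ⟨h1, h2, ?_, ?_, ?_, ?_⟩ <;>
    simp only [← wSeq_eq_wGen, ← BSeq_eq_BGen, wSeq_eq_wGen, BSeq_eq_BGen, zero_add] at * <;>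
    assumption

/-- the value function at the initial state equals the optimal capital
increment of the planning problem (both sides `⊥ = -∞` when no feasible plan exists). -/
theorem stmt11 (T : ℕ) (hT : 1 ≤ T) (d p c h s : ℕ → ℝ)
    (hc : ∀ t, 0 < c t)
    (hd : ∀ t, 0 ≤ d t) (hp : ∀ t, 0 ≤ p t) (hh : ∀ t, 0 ≤ h t) (hs : ∀ t, 0 ≤ s t)
    (β : ℝ) (hβ0 : 0 ≤ β) (hβ1 : β ≤ 1)
    (B0 R : ℝ) (hB0 : 0 ≤ B0) (hR : 0 ≤ R)
    (TL : ℕ) (hTL1 : 1 ≤ TL) (hTL2 : TL ≤ T) :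
    fVal T d p c h s β R TL T 0 B0 0
      = sSup {x : EReal | ∃ y v : ℕ → ℝ,
          Feasible T d p c h s β B0 R TL y v ∧
          x = ((BSeq p h s c R TL y v 1 B0 T - B0 : ℝ) : EReal)} := by
  have key := fVal_eq_sSup T d p c h s β R TL T le_rfl 0 B0 0
  have hT1 : T + 1 - T = 1 := by omega
  rw [hT1] at key
  rw [key]
  congr 1
  ext x
  simp only [Set.mem_setOf_eq]
  constructor
  · rintro ⟨y, v, hf, rfl⟩
    exact ⟨y, v, (Feasible_iff_FeasGen T d p c h s β B0 R TL y v).mpr hf,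
      by rw [BSeq_eq_BGen]⟩
  · rintro ⟨y, v, hf, rfl⟩
    exact ⟨y, v, (Feasible_iff_FeasGen T d p c h s β B0 R TL y v).mp hf,
      by rw [BSeq_eq_BGen]⟩
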